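/- For every integer d ≥ 2 and every real z with 0 < z < 1, the polynomial G_d(z) = 4(1 − z)²·(−d²(z^{2d} − 2z^d − 5) + (z^d − 1)²) − 6(z^d − 1)²·((−d + 1)z + (d + 1))² satisfies G_d(z) ≥ 0. -/
import Mathlib


/-- The polynomial
`G_d(z) = 4(1−z)²(−d²(z^{2d} − 2z^d − 5) + (z^d − 1)²) − 6(z^d − 1)²((−d+1)z + (d+1))²`. -/
def Gpoly (d : ℕ) (z : ℝ) : ℝ :=
  4 * (1 - z) ^ 2 * (-(d : ℝ) ^ 2 * (z ^ (2 * d) - 2 * z ^ d - 5) + (z ^ d - 1) ^ 2) -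
    6 * (z ^ d - 1) ^ 2 * ((-(d : ℝ) + 1) * z + ((d : ℝ) + 1)) ^ 2

noncomputable def gA0 (d k : ℕ) : ℝ :=
  ((k : ℝ) + 1) * ((k : ℝ) + 2) *
    (7 * (d : ℝ) ^ 2 - 2 * (2 * (k : ℝ) + 3) * (d : ℝ) - ((k : ℝ) ^ 2 + 3 * (k : ℝ) + 1))

noncomputable def gA1 (d k : ℕ) : ℝ :=
  -28 - 46 * (k : ℝ) - 24 * (k : ℝ) ^ 2 - 4 * (k : ℝ) ^ 3 - 48 * (d : ℝ) - 48 * (d : ℝ) * (k : ℝ)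
    - 12 * (d : ℝ) * (k : ℝ) ^ 2 + 28 * (d : ℝ) ^ 2 + 14 * (d : ℝ) ^ 2 * (k : ℝ)

noncomputable def gA2 (d k : ℕ) : ℝ :=
  -74 - 60 * (k : ℝ) - 12 * (k : ℝ) ^ 2 - 60 * (d : ℝ) - 24 * (d : ℝ) * (k : ℝ) + 14 * (d : ℝ) ^ 2

noncomputable def gA3 (d k : ℕ) : ℝ := -72 - 24 * (k : ℝ) - 24 * (d : ℝ)

noncomputable def gA4 (d k : ℕ) : ℝ := -24

noncomputable def gB0 (d k : ℕ) : ℝ :=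
  ((d : ℝ) - 1 - (k : ℝ)) * ((d : ℝ) - (k : ℝ)) *
    ((2 * (d : ℝ) + 2 * (k : ℝ) + 1) ^ 2 + 4 * (d : ℝ) ^ 2 - 5) / 4

noncomputable def gB1 (d k : ℕ) : ℝ :=
  2 + 10 * (k : ℝ) + 12 * (k : ℝ) ^ 2 + 4 * (k : ℝ) ^ 3 + 2 * (d : ℝ) - 2 * (d : ℝ) ^ 2
    - 2 * (d : ℝ) ^ 2 * (k : ℝ) - 2 * (d : ℝ) ^ 3

noncomputable def gB2 (d k : ℕ) : ℝ :=
  26 + 36 * (k : ℝ) + 12 * (k : ℝ) ^ 2 - 2 * (d : ℝ) ^ 2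

noncomputable def gB3 (d k : ℕ) : ℝ := 48 + 24 * (k : ℝ)

noncomputable def gB4 (d k : ℕ) : ℝ := 24

lemma tele2 (f : ℕ → ℝ) (z : ℝ) (n : ℕ) :
    (1 - z) * ∑ k ∈ Finset.range n, f k * z ^ k
      = f 0 - f n * z ^ n + z * ∑ k ∈ Finset.range n, (f (k + 1) - f k) * z ^ k := by
  induction n with
  | zero => simp
  | succ n ih =>
    rw [Finset.sum_range_succ, Finset.sum_range_succ, mul_add, ih]
    ring

lemma five (g0 g1 g2 g3 g4 : ℕ → ℝ) (z : ℝ) (n : ℕ)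
    (h1 : ∀ k, g1 k = g0 (k + 1) - g0 k)
    (h2 : ∀ k, g2 k = g1 (k + 1) - g1 k)
    (h3 : ∀ k, g3 k = g2 (k + 1) - g2 k)
    (h4 : ∀ k, g4 k = g3 (k + 1) - g3 k)
    (h5 : ∀ k, g4 (k + 1) - g4 k = 0) :
    (1 - z) ^ 5 * ∑ k ∈ Finset.range n, g0 k * z ^ k
      = (1 - z) ^ 4 * (g0 0 - g0 n * z ^ n)
        + (1 - z) ^ 3 * z * (g1 0 - g1 n * z ^ n)
        + (1 - z) ^ 2 * z ^ 2 * (g2 0 - g2 n * z ^ n)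
        + (1 - z) * z ^ 3 * (g3 0 - g3 n * z ^ n)
        + z ^ 4 * (g4 0 - g4 n * z ^ n) := by
  have e0 := tele2 g0 z n
  have e1 := tele2 g1 z n
  have e2 := tele2 g2 z n
  have e3 := tele2 g3 z n
  have e4 := tele2 g4 z n
  simp only [← h1] at e0
  simp only [← h2] at e1
  simp only [← h3] at e2
  simp only [← h4] at e3
  simp only [h5, zero_mul, Finset.sum_const_zero, mul_zero, add_zero] at e4
  linear_combination (1 - z) ^ 4 * e0 + (1 - z) ^ 3 * z * e1 + (1 - z) ^ 2 * z ^ 2 * e2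
    + (1 - z) * z ^ 3 * e3 + z ^ 4 * e4

/-- For every integer `d ≥ 2` and every `0 < z < 1`, `G_d(z) ≥ 0`. -/
theorem Gpoly_nonneg (d : ℕ) (hd : 2 ≤ d) (z : ℝ) (hz0 : 0 < z) (hz1 : z < 1) :
    0 ≤ Gpoly d z := by
  have hd1 : 1 ≤ d := by omega
  have hn : ((d - 1 : ℕ) : ℝ) = (d : ℝ) - 1 := by
    rw [Nat.cast_sub hd1, Nat.cast_one]
  have hdr : (2 : ℝ) ≤ (d : ℝ) := by exact_mod_cast hd
  have hzd : z ^ d = z * z ^ (d - 1) := by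
    have h : d = (d - 1) + 1 := by omega
    conv_lhs => rw [h, pow_succ']
  have h2d : z ^ (2 * d) = z ^ d * z ^ d := by rw [two_mul, pow_add]
  have key : Gpoly d z
      = (1 - z) ^ 5 * ((∑ k ∈ Finset.range (d - 1), gA0 d k * z ^ k)
          + z ^ (d - 1) * ∑ k ∈ Finset.range (d - 1), gB0 d k * z ^ k) := by
    have hA1 : ∀ k, gA1 d k = gA0 d (k + 1) - gA0 d k := by
      intro k; simp only [gA0, gA1]; push_cast; ring
    have hA2 : ∀ k, gA2 d k = gA1 d (k + 1) - gA1 d k := by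
      intro k; simp only [gA1, gA2]; push_cast; ring
    have hA3 : ∀ k, gA3 d k = gA2 d (k + 1) - gA2 d k := by
      intro k; simp only [gA2, gA3]; push_cast; ring
    have hA4 : ∀ k, gA4 d k = gA3 d (k + 1) - gA3 d k := by
      intro k; simp only [gA3, gA4]; push_cast; ring
    have hA5 : ∀ k, gA4 d (k + 1) - gA4 d k = 0 := by
      intro k; simp only [gA4]; ring
    have hB1 : ∀ k, gB1 d k = gB0 d (k + 1) - gB0 d k := by
      intro k; simp only [gB0, gB1]; push_cast; ring
    have hB2 : ∀ k, gB2 d k = gB1 d (k + 1) - gB1 d k := by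
      intro k; simp only [gB1, gB2]; push_cast; ring
    have hB3 : ∀ k, gB3 d k = gB2 d (k + 1) - gB2 d k := by
      intro k; simp only [gB2, gB3]; push_cast; ring
    have hB4 : ∀ k, gB4 d k = gB3 d (k + 1) - gB3 d k := by
      intro k; simp only [gB3, gB4]; push_cast; ring
    have hB5 : ∀ k, gB4 d (k + 1) - gB4 d k = 0 := by
      intro k; simp only [gB4]; ring
    have keyA := five (gA0 d) (gA1 d) (gA2 d) (gA3 d) (gA4 d) z (d - 1)
      hA1 hA2 hA3 hA4 hA5
    have keyB := five (gB0 d) (gB1 d) (gB2 d) (gB3 d) (gB4 d) z (d - 1)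
      hB1 hB2 hB3 hB4 hB5
    rw [show (1 - z) ^ 5 * ((∑ k ∈ Finset.range (d - 1), gA0 d k * z ^ k)
          + z ^ (d - 1) * ∑ k ∈ Finset.range (d - 1), gB0 d k * z ^ k)
        = (1 - z) ^ 5 * (∑ k ∈ Finset.range (d - 1), gA0 d k * z ^ k)
          + z ^ (d - 1) * ((1 - z) ^ 5 * ∑ k ∈ Finset.range (d - 1), gB0 d k * z ^ k)
        from by ring, keyA, keyB]
    simp only [gA0, gA1, gA2, gA3, gA4, gB0, gB1, gB2, gB3, gB4, Gpoly]
    rw [h2d, hzd, hn]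
    push_cast
    ring
  have hQA : 0 ≤ ∑ k ∈ Finset.range (d - 1), gA0 d k * z ^ k := by
    apply Finset.sum_nonneg
    intro k hk
    have hkd : k + 2 ≤ d := by
      have := Finset.mem_range.mp hk; omega
    have hkd' : (k : ℝ) + 2 ≤ (d : ℝ) := by exact_mod_cast hkd
    have hk0 : (0 : ℝ) ≤ (k : ℝ) := Nat.cast_nonneg k
    apply mul_nonneg _ (le_of_lt (pow_pos hz0 k))
    simp only [gA0]
    have hj : (0 : ℝ) ≤ (d : ℝ) - 2 - (k : ℝ) := by linarith
    apply mul_nonneg (by positivity)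
    nlinarith [mul_nonneg hk0 hj, sq_nonneg ((d : ℝ) - 2 - (k : ℝ)),
      mul_nonneg (by linarith : (0 : ℝ) ≤ 3 * (d : ℝ) + 5) hj]
  have hQB : 0 ≤ ∑ k ∈ Finset.range (d - 1), gB0 d k * z ^ k := by
    apply Finset.sum_nonneg
    intro k hk
    have hkd : k + 2 ≤ d := by
      have := Finset.mem_range.mp hk; omega
    have hkd' : (k : ℝ) + 2 ≤ (d : ℝ) := by exact_mod_cast hkd
    have hk0 : (0 : ℝ) ≤ (k : ℝ) := Nat.cast_nonneg k
    apply mul_nonneg _ (le_of_lt (pow_pos hz0 k))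
    simp only [gB0]
    apply div_nonneg _ (by norm_num)
    apply mul_nonneg (mul_nonneg (by linarith) (by linarith))
    nlinarith [sq_nonneg (2 * (d : ℝ) + 2 * (k : ℝ) + 1)]
  rw [key]
  have h1z : (0 : ℝ) ≤ 1 - z := by linarith
  exact mul_nonneg (pow_nonneg h1z 5)
    (add_nonneg hQA (mul_nonneg (le_of_lt (pow_pos hz0 (d - 1))) hQB))
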